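/- Consider a system configuration Φ consisting of finitely many scheduled users, user m having a finite nonempty active link set Φ_m, with optimal system EE EE*_Φ, and let k be a user not in Φ with finite nonempty link set Φ_k and optimal user EE EE*_{Φ_k}. Let Φ ∪ Φ_k denote the configuration in which user k is additionally scheduled with link set Φ_k. Then: (a) if EE*_Φ ≤ EE*_{Φ_k}, then EE*_Φ ≤ EE*_{Φ ∪ Φ_k} ≤ EE*_{Φ_k}; and (b) if EE*_Φ > EE*_{Φ_k}, then EE*_Φ > EE*_{Φ ∪ Φ_k} > EE*_{Φ_k}. (Theorem 2, part 1, of the paper.) -/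
import Mathlib

private lemma mediant_le' {a b c d E : ℝ} (hb : 0 < b) (hd : 0 < d)
    (h1 : a / b ≤ E) (h2 : c / d ≤ E) : (a + c) / (b + d) ≤ E := by
  rw [div_le_iff₀ hb] at h1
  rw [div_le_iff₀ hd] at h2
  rw [div_le_iff₀ (by linarith)]
  nlinarith

private lemma mediant_lt' {a b c d E : ℝ} (hb : 0 < b) (hd : 0 < d)
    (h1 : a / b ≤ E) (h2 : c / d < E) : (a + c) / (b + d) < E := by
  rw [div_le_iff₀ hb] at h1
  rw [div_lt_iff₀ hd] at h2
  rw [div_lt_iff₀ (by linarith)]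
  nlinarith

private lemma le_mediant' {a b c d E : ℝ} (hb : 0 < b) (hd : 0 < d)
    (h1 : E ≤ a / b) (h2 : E ≤ c / d) : E ≤ (a + c) / (b + d) := by
  rw [le_div_iff₀ hb] at h1
  rw [le_div_iff₀ hd] at h2
  rw [le_div_iff₀ (by linarith)]
  nlinarith

private lemma lt_mediant' {a b c d E : ℝ} (hb : 0 < b) (hd : 0 < d)
    (h1 : E ≤ a / b) (h2 : E < c / d) : E < (a + c) / (b + d) := by
  rw [le_div_iff₀ hb] at h1
  rw [lt_div_iff₀ hd] at h2
  rw [lt_div_iff₀ (by linarith)]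
  nlinarith


/-- The user energy efficiency of a user with weight `ω`, static circuit power `Ps`,
active link set `S`, gains `g` and power allocation `p`. -/
noncomputable def userEE {ι : Type*} (ω B Γ σ2 ξ Pd Ps : ℝ) (S : Finset ι)
    (g : ι → ℝ) (p : ι → ℝ) : ℝ :=
  (∑ i ∈ S, ω * B * Real.logb 2 (1 + p i * g i / (Γ * σ2))) /
    ((∑ i ∈ S, p i) / ξ + S.card * Pd + Ps)

/-- `E` is the optimal user EE over the power box `∏_{i∈S} [0, Pmax_i]` (attained). -/
def IsOptUserEE {ι : Type*} (ω B Γ σ2 ξ Pd Ps : ℝ) (S : Finset ι)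
    (g Pmax : ι → ℝ) (E : ℝ) : Prop :=
  (∃ p : ι → ℝ, (∀ i ∈ S, p i ∈ Set.Icc 0 (Pmax i)) ∧
      userEE ω B Γ σ2 ξ Pd Ps S g p = E) ∧
    ∀ p : ι → ℝ, (∀ i ∈ S, p i ∈ Set.Icc 0 (Pmax i)) →
      userEE ω B Γ σ2 ξ Pd Ps S g p ≤ E

/-- The system energy efficiency of a configuration with scheduled user set `U`,
per-user active link sets `S`, user weights `ω`, user static powers `Ps`, gains `g`,
static receiving power `P0`, and power allocation `p`. -/
noncomputable def sysEE {κ ι : Type*} (B Γ σ2 ξ Pd P0 : ℝ)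
    (ω Ps : κ → ℝ) (g : κ → ι → ℝ)
    (U : Finset κ) (S : κ → Finset ι) (p : κ → ι → ℝ) : ℝ :=
  (∑ m ∈ U, ∑ i ∈ S m, ω m * B * Real.logb 2 (1 + p m i * g m i / (Γ * σ2))) /
    (∑ m ∈ U, ((∑ i ∈ S m, p m i) / ξ + (S m).card * Pd + Ps m) + P0)

/-- `E` is the optimal system EE of the configuration `(U, S)` over the power box
(attained). -/
def IsOptSysEE {κ ι : Type*} (B Γ σ2 ξ Pd P0 : ℝ)
    (ω Ps : κ → ℝ) (g Pmax : κ → ι → ℝ)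
    (U : Finset κ) (S : κ → Finset ι) (E : ℝ) : Prop :=
  (∃ p : κ → ι → ℝ, (∀ m ∈ U, ∀ i ∈ S m, p m i ∈ Set.Icc 0 (Pmax m i)) ∧
      sysEE B Γ σ2 ξ Pd P0 ω Ps g U S p = E) ∧
    ∀ p : κ → ι → ℝ, (∀ m ∈ U, ∀ i ∈ S m, p m i ∈ Set.Icc 0 (Pmax m i)) →
      sysEE B Γ σ2 ξ Pd P0 ω Ps g U S p ≤ E

/-- Theorem 2, part 1, of the paper: scheduling an additional user `k ∉ Φ` moves the
optimal system EE between its old value and the optimal user EE of `k`: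
if `EE*_Φ ≤ EE*_{Φ_k}` then `EE*_Φ ≤ EE*_{Φ∪Φ_k} ≤ EE*_{Φ_k}`, and if
`EE*_Φ > EE*_{Φ_k}` then `EE*_Φ > EE*_{Φ∪Φ_k} > EE*_{Φ_k}`. -/
theorem sysEE_schedule_user_between {κ ι : Type*} [DecidableEq κ]
    (B Γ σ2 ξ Pd P0 : ℝ)
    (hB : 0 < B) (hΓ : 0 < Γ) (hσ2 : 0 < σ2)
    (hξ0 : 0 < ξ) (hξ1 : ξ ≤ 1) (hPd : 0 < Pd) (hP0 : 0 < P0)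
    (ω Ps : κ → ℝ) (g Pmax : κ → ι → ℝ)
    (hω : ∀ m, 0 < ω m) (hPs : ∀ m, 0 < Ps m)
    (hg : ∀ m i, 0 < g m i) (hPm : ∀ m i, 0 < Pmax m i)
    (U : Finset κ) (S : κ → Finset ι)
    (hSne : ∀ m ∈ U, (S m).Nonempty)
    (k : κ) (hk : k ∉ U) (hSk : (S k).Nonempty)
    (EΦ E' Ek : ℝ)
    (hEΦ : IsOptSysEE B Γ σ2 ξ Pd P0 ω Ps g Pmax U S EΦ)
    (hE' : IsOptSysEE B Γ σ2 ξ Pd P0 ω Ps g Pmax (insert k U) S E')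
    (hEk : IsOptUserEE (ω k) B Γ σ2 ξ Pd (Ps k) (S k) (g k) (Pmax k) Ek) :
    (EΦ ≤ Ek → EΦ ≤ E' ∧ E' ≤ Ek) ∧ (Ek < EΦ → Ek < E' ∧ E' < EΦ) := by
  obtain ⟨⟨pΦ, hpΦ, hpΦE⟩, hΦub⟩ := hEΦ
  obtain ⟨⟨p', hp', hp'E⟩, h'ub⟩ := hE'
  obtain ⟨⟨qk, hqk, hqkE⟩, hkub⟩ := hEk
  set num : (κ → ι → ℝ) → ℝ := fun p =>
    ∑ m ∈ U, ∑ i ∈ S m, ω m * B * Real.logb 2 (1 + p m i * g m i / (Γ * σ2)) with hnum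
  set den : (κ → ι → ℝ) → ℝ := fun p =>
    ∑ m ∈ U, ((∑ i ∈ S m, p m i) / ξ + (S m).card * Pd + Ps m) + P0 with hden
  set numk : (ι → ℝ) → ℝ := fun q =>
    ∑ i ∈ S k, ω k * B * Real.logb 2 (1 + q i * g k i / (Γ * σ2)) with hnumk
  set denk : (ι → ℝ) → ℝ := fun q =>
    (∑ i ∈ S k, q i) / ξ + (S k).card * Pd + Ps k with hdenk
  have hsysU : ∀ p, sysEE B Γ σ2 ξ Pd P0 ω Ps g U S p = num p / den p := fun p => rfl
  have huser : ∀ q, userEE (ω k) B Γ σ2 ξ Pd (Ps k) (S k) (g k) q = numk q / denk q :=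
    fun q => rfl
  have hsplit : ∀ p, sysEE B Γ σ2 ξ Pd P0 ω Ps g (insert k U) S p
      = (numk (p k) + num p) / (denk (p k) + den p) := by
    intro p
    unfold sysEE
    rw [Finset.sum_insert hk, Finset.sum_insert hk]
    congr 1
    simp only [hden, hdenk]
    ring
  have hden_pos : ∀ p : κ → ι → ℝ,
      (∀ m ∈ U, ∀ i ∈ S m, p m i ∈ Set.Icc 0 (Pmax m i)) → 0 < den p := by
    intro p hp
    have h1 : (0:ℝ) ≤ ∑ m ∈ U, ((∑ i ∈ S m, p m i) / ξ + (S m).card * Pd + Ps m) := by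
      refine Finset.sum_nonneg fun m hm => ?_
      have hs : 0 ≤ ∑ i ∈ S m, p m i :=
        Finset.sum_nonneg fun i hi => (hp m hm i hi).1
      have := (hPs m).le
      have hc : (0:ℝ) ≤ (S m).card * Pd := by positivity
      have := div_nonneg hs hξ0.le
      linarith
    simp only [hden]
    linarith
  have hdenk_pos : ∀ q : ι → ℝ,
      (∀ i ∈ S k, q i ∈ Set.Icc 0 (Pmax k i)) → 0 < denk q := by
    intro q hq
    have hs : 0 ≤ ∑ i ∈ S k, q i := Finset.sum_nonneg fun i hi => (hq i hi).1
    have hc : (0:ℝ) ≤ ((S k).card : ℝ) * Pd := by positivity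
    have := div_nonneg hs hξ0.le
    have := hPs k
    simp only [hdenk]
    linarith
  -- combined allocation: optimal for U plus optimal for user k
  set pc : κ → ι → ℝ := fun m => if m = k then qk else pΦ m with hpc_def
  have hpck : pc k = qk := if_pos rfl
  have hpcU : ∀ m ∈ U, pc m = pΦ m := fun m hm =>
    if_neg (ne_of_mem_of_not_mem hm hk)
  have hpc : ∀ m ∈ insert k U, ∀ i ∈ S m, pc m i ∈ Set.Icc 0 (Pmax m i) := by
    intro m hm i hi
    rcases Finset.mem_insert.mp hm with rfl | hmU
    · rw [hpck]; exact hqk i hi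
    · rw [hpcU m hmU]; exact hpΦ m hmU i hi
  have hnum_pc : num pc = num pΦ :=
    Finset.sum_congr rfl fun m hm => by rw [hpcU m hm]
  have hden_pc : den pc = den pΦ := by
    simp only [hden]
    congr 1
    exact Finset.sum_congr rfl fun m hm => by rw [hpcU m hm]
  have hcomb : (numk qk + num pΦ) / (denk qk + den pΦ) ≤ E' := by
    have := h'ub pc hpc
    rwa [hsplit, hpck, hnum_pc, hden_pc] at this
  -- the fractions at the optima
  have hfracΦ : num pΦ / den pΦ = EΦ := by rw [← hsysU]; exact hpΦE
  have hfrack : numk qk / denk qk = Ek := by rw [← huser]; exact hqkE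
  have hdΦ : 0 < den pΦ := hden_pos pΦ hpΦ
  have hdk : 0 < denk qk := hdenk_pos qk hqk
  -- constraints of the optimal allocation for insert k U, restricted
  have hp'U : ∀ m ∈ U, ∀ i ∈ S m, p' m i ∈ Set.Icc 0 (Pmax m i) :=
    fun m hm => hp' m (Finset.mem_insert_of_mem hm)
  have hp'k : ∀ i ∈ S k, p' k i ∈ Set.Icc 0 (Pmax k i) :=
    hp' k (Finset.mem_insert_self k U)
  have hd'U : 0 < den p' := hden_pos p' hp'U
  have hd'k : 0 < denk (p' k) := hdenk_pos (p' k) hp'k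
  have hE'eq : (numk (p' k) + num p') / (denk (p' k) + den p') = E' := by
    rw [← hsplit]; exact hp'E
  have hfrac'U : num p' / den p' ≤ EΦ := by rw [← hsysU]; exact hΦub p' hp'U
  have hfrac'k : numk (p' k) / denk (p' k) ≤ Ek := by rw [← huser]; exact hkub (p' k) hp'k
  constructor
  · intro hle
    constructor
    · refine le_trans ?_ hcomb
      exact le_mediant' hdk hdΦ (by rw [hfrack]; exact hle) (by rw [hfracΦ])
    · rw [← hE'eq]
      exact mediant_le' hd'k hd'U hfrac'k (le_trans hfrac'U hle)
  · intro hlt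
    constructor
    · refine lt_of_lt_of_le ?_ hcomb
      exact lt_mediant' hdk hdΦ (by rw [hfrack]) (by rw [hfracΦ]; exact hlt)
    · rw [← hE'eq, add_comm (numk (p' k)), add_comm (denk (p' k))]
      exact mediant_lt' hd'U hd'k hfrac'U (lt_of_le_of_lt hfrac'k hlt)
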